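/- Let X and Y be Banach spaces and T_k ∈ B(X,Y). The series ∑_k T_k is c_0(X)-multiplier convergent if and only if the space M^∞_{wR}(∑_k T_k) = { x ∈ ℓ_∞(X) : ∑_k T_k x_k is weakly Riesz convergent in Y }, with the sup norm, is a Banach space. -/

import Mathlib

open Filter Finset Topology BoundedContinuousFunction

/-- A series `∑ s k` is weakly Riesz convergent to `l` (w.r.t. weights `r`) if
for every continuous linear functional `φ`, the Riesz means of `φ` applied to
the partial sums converge to `φ l`. -/
def WeakRieszSeriesConvTo {Y : Type*} [NormedAddCommGroup Y] [NormedSpace ℝ Y]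
    (r : ℕ → ℝ) (s : ℕ → Y) (l : Y) : Prop :=
  ∀ φ : Y →L[ℝ] ℝ,
    Tendsto (fun n => (∑ k ∈ Finset.range (n + 1), r k)⁻¹ *
        ∑ k ∈ Finset.range (n + 1), r k * φ (∑ j ∈ Finset.range (k + 1), s j))
      atTop (𝓝 (φ l))

/-! Both directions rest on Banach–Steinhaus. If `∑ T k` is `c₀(X)`-multiplier convergent, the
partial-sum operators `f ↦ ∑_{k<n} T k (f k)` are pointwise bounded on the Banach space `c₀(X)`,
hence uniformly bounded; since each one only sees finitely many terms, the bound persists on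
`ℓ_∞(X)` and passes to their Riesz means. Weak limits `y` of a uniformly bounded family then obey
`‖y‖ ≤ C ‖f‖`, which makes the multiplier space closed in `ℓ_∞(X)`.

Conversely, if the multiplier space is complete, the Riesz-mean operators are pointwise bounded on
it (a weakly convergent sequence is bounded), hence uniformly bounded. Riesz means are regular, so
a finitely supported `x` is a multiplier with weak Riesz limit `∑_{k ∈ s} T k (x k)`; this yields
`‖∑_{k ∈ s} T k (x k)‖ ≤ C sup_{k ∈ s} ‖x k‖`, the Cauchy criterion for `∑ T k (x k)` when `x` is
null. -/

open scoped ZeroAtInfty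

noncomputable section

section WeakLimits

variable {E F : Type*} [NormedAddCommGroup E] [NormedSpace ℝ E]
  [NormedAddCommGroup F] [NormedSpace ℝ F]

theorem norm_le_of_forall_dual_tendsto {v : ℕ → F} {y : F} {B : ℝ} (hv : ∀ n, ‖v n‖ ≤ B)
    (h : ∀ φ : StrongDual ℝ F, Tendsto (fun n => φ (v n)) atTop (𝓝 (φ y))) : ‖y‖ ≤ B :=
  NormedSpace.norm_le_dual_bound ℝ y ((norm_nonneg _).trans (hv 0)) fun φ =>
    le_of_tendsto (h φ).norm <| Eventually.of_forall fun n =>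
      (φ.le_opNorm (v n)).trans <| by rw [mul_comm]; gcongr; exact hv n

theorem exists_norm_le_of_forall_dual_tendsto {v : ℕ → F} {y : F}
    (h : ∀ φ : StrongDual ℝ F, Tendsto (fun n => φ (v n)) atTop (𝓝 (φ y))) :
    ∃ C, ∀ n, ‖v n‖ ≤ C := by
  obtain ⟨C, hC⟩ := banach_steinhaus (g := fun n => NormedSpace.inclusionInDoubleDualLi ℝ (v n))
    fun φ => (h φ).norm.bddAbove_range.imp fun _ hc n => hc (Set.mem_range_self n)
  exact ⟨C, fun n => ((NormedSpace.inclusionInDoubleDualLi ℝ).norm_map (v n)).symm.trans_le (hC n)⟩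

def weakConvergenceSubmodule (σ : ℕ → E →L[ℝ] F) : Submodule ℝ E where
  carrier := {e | ∃ y, ∀ φ : StrongDual ℝ F, Tendsto (fun n => φ (σ n e)) atTop (𝓝 (φ y))}
  add_mem' := by
    rintro e e' ⟨y, hy⟩ ⟨y', hy'⟩
    exact ⟨y + y', fun φ => by simpa only [map_add] using (hy φ).add (hy' φ)⟩
  zero_mem' := ⟨0, fun φ => by simpa only [map_zero] using tendsto_const_nhds⟩
  smul_mem' := by
    rintro c e ⟨y, hy⟩
    exact ⟨c • y, fun φ => by simpa only [map_smul, smul_eq_mul] using (hy φ).const_mul c⟩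

theorem isClosed_weakConvergenceSubmodule [CompleteSpace F] {σ : ℕ → E →L[ℝ] F} {C : ℝ}
    (hσ : ∀ n, ‖σ n‖ ≤ C) : IsClosed (weakConvergenceSubmodule σ : Set E) := by
  have hC : 0 ≤ C := (norm_nonneg _).trans (hσ 0)
  refine isSeqClosed_iff_isClosed.mp fun f e hf hfe => ?_
  choose y hy using hf
  have hdist : ∀ i j, dist (y i) (y j) ≤ C * dist (f i) (f j) := fun i j => by
    rw [dist_eq_norm, dist_eq_norm]
    refine norm_le_of_forall_dual_tendsto (v := fun n => σ n (f i - f j)) (fun n => ?_)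
      fun φ => ?_
    · exact (σ n).le_of_opNorm_le (hσ n) (f i - f j)
    · simpa only [map_sub] using (hy i φ).sub (hy j φ)
  obtain ⟨b, hb0, hbf, hb⟩ := cauchySeq_iff_le_tendsto_0.mp hfe.cauchySeq
  obtain ⟨y₀, hy₀⟩ := cauchySeq_tendsto_of_complete <| cauchySeq_iff_le_tendsto_0.mpr
    ⟨fun N => C * b N, fun N => mul_nonneg hC (hb0 N),
      fun n m N hn hm => (hdist n m).trans (mul_le_mul_of_nonneg_left (hbf n m N hn hm) hC),
      by simpa using hb.const_mul C⟩
  refine ⟨y₀, fun φ => ?_⟩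
  -- `φ (σ n (f i)) → φ (σ n e)` uniformly in `n`, because `‖σ n‖ ≤ C`
  have hunif : TendstoUniformly (fun i n => φ (σ n (f i))) (fun n => φ (σ n e)) atTop := by
    rw [Metric.tendstoUniformly_iff]
    intro ε hε
    have hlim : Tendsto (fun i => ‖φ‖ * (C * dist e (f i))) atTop (𝓝 0) := by
      simpa using (((tendsto_const_nhds (x := e)).dist hfe).const_mul C).const_mul ‖φ‖
    filter_upwards [hlim.eventually (gt_mem_nhds hε)] with i hi n
    refine lt_of_le_of_lt ?_ hi
    rw [dist_eq_norm, ← map_sub, ← map_sub, dist_eq_norm]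
    exact φ.le_of_opNorm_le_of_le le_rfl ((σ n).le_of_opNorm_le (hσ n) _)
  exact hunif.tendsto_of_eventually_tendsto (Eventually.of_forall fun i => hy i φ)
    ((φ.continuous.tendsto y₀).comp hy₀)

theorem exists_bound_of_isComplete_weakConvergenceSubmodule {σ : ℕ → E →L[ℝ] F}
    (h : IsComplete (weakConvergenceSubmodule σ : Set E)) :
    ∃ C, 0 ≤ C ∧ ∀ n, ∀ e ∈ weakConvergenceSubmodule σ, ‖σ n e‖ ≤ C * ‖e‖ := by
  have : CompleteSpace (weakConvergenceSubmodule σ) := h.completeSpace_coe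
  obtain ⟨C, hC⟩ := banach_steinhaus
    (g := fun n => (σ n).comp (weakConvergenceSubmodule σ).subtypeL)
    fun e => exists_norm_le_of_forall_dual_tendsto e.2.choose_spec
  exact ⟨C, (norm_nonneg _).trans (hC 0), fun n e he =>
    ((σ n).comp _).le_of_opNorm_le (hC n) ⟨e, he⟩⟩

end WeakLimits

section RieszMean

def rieszMean {E : Type*} [AddCommGroup E] [Module ℝ E] (r : ℕ → ℝ) (s : ℕ → E) (n : ℕ) : E :=
  (∑ k ∈ range (n + 1), r k)⁻¹ • ∑ k ∈ range (n + 1), r k • s k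

theorem map_rieszMean {E E' G : Type*} [AddCommGroup E] [Module ℝ E] [AddCommGroup E']
    [Module ℝ E'] [FunLike G E E'] [LinearMapClass G ℝ E E'] (g : G) (r : ℕ → ℝ) (s : ℕ → E)
    (n : ℕ) : g (rieszMean r s n) = rieszMean r (fun k => g (s k)) n := by
  simp only [rieszMean, map_smul, map_sum]

variable {E F : Type*} [NormedAddCommGroup E] [NormedSpace ℝ E] {r : ℕ → ℝ}

theorem rieszMean_apply [NormedAddCommGroup F] [NormedSpace ℝ F] (r : ℕ → ℝ)
    (A : ℕ → E →L[ℝ] F) (n : ℕ) (e : E) : rieszMean r A n e = rieszMean r (fun k => A k e) n :=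
  map_rieszMean (ContinuousLinearMap.apply ℝ F e) r A n

theorem norm_rieszMean_le (hr : ∀ k, 0 ≤ r k) {s : ℕ → E} {B : ℝ} (hs : ∀ k, ‖s k‖ ≤ B)
    (n : ℕ) : ‖rieszMean r s n‖ ≤ B := by
  have hR : 0 ≤ ∑ k ∈ range (n + 1), r k := sum_nonneg fun k _ => hr k
  calc ‖rieszMean r s n‖
      ≤ (∑ k ∈ range (n + 1), r k)⁻¹ * ∑ k ∈ range (n + 1), r k * B := by
        rw [rieszMean, norm_smul, Real.norm_of_nonneg (inv_nonneg.mpr hR)]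
        gcongr
        refine norm_sum_le_of_le _ fun k _ => ?_
        rw [norm_smul, Real.norm_of_nonneg (hr k)]
        exact mul_le_mul_of_nonneg_left (hs k) (hr k)
    _ = ((∑ k ∈ range (n + 1), r k)⁻¹ * ∑ k ∈ range (n + 1), r k) * B := by
        rw [← sum_mul, mul_assoc]
    _ ≤ B := mul_le_of_le_one_left ((norm_nonneg _).trans (hs 0))
        (inv_mul_le_one_of_le₀ le_rfl hR)

theorem tendsto_rieszMean (hr : ∀ k, 0 ≤ r k)
    (hR : Tendsto (fun n => ∑ k ∈ range n, r k) atTop atTop) {s : ℕ → E} {l : E}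
    (hs : Tendsto s atTop (𝓝 l)) : Tendsto (rieszMean r s) atTop (𝓝 l) := by
  have hR' : Tendsto (fun n => ∑ k ∈ range (n + 1), r k) atTop atTop :=
    hR.comp (tendsto_add_atTop_nat 1)
  have hlittle : (fun n => ∑ k ∈ range (n + 1), r k • (s k - l)) =o[atTop]
      fun n => ∑ k ∈ range (n + 1), r k := by
    refine (Asymptotics.IsLittleO.sum_range ?_ hr hR).comp_tendsto (tendsto_add_atTop_nat 1)
    simpa using (Asymptotics.isBigO_refl r atTop).smul_isLittleO
      ((Asymptotics.isLittleO_one_iff ℝ).mpr (tendsto_sub_nhds_zero_iff.mpr hs))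
  rw [← tendsto_sub_nhds_zero_iff, ← Asymptotics.isLittleO_one_iff ℝ]
  refine ((Asymptotics.isBigO_refl (fun n => (∑ k ∈ range (n + 1), r k)⁻¹) atTop).smul_isLittleO
    hlittle).congr' ?_ ?_
  · filter_upwards [hR'.eventually_gt_atTop 0] with n hn
    simp only [rieszMean, smul_sub, sum_sub_distrib, ← sum_smul, smul_smul,
      inv_mul_cancel₀ hn.ne', one_smul]
  · filter_upwards [hR'.eventually_gt_atTop 0] with n hn
    exact inv_mul_cancel₀ hn.ne'

end RieszMean

def ZeroAtInftyContinuousMap.toBCFₗᵢ (α β : Type*) [TopologicalSpace α] [NormedAddCommGroup β]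
    [NormedSpace ℝ β] : C₀(α, β) →ₗᵢ[ℝ] α →ᵇ β where
  toFun := ZeroAtInftyContinuousMap.toBCF
  map_add' _ _ := rfl
  map_smul' _ _ := rfl
  norm_map' _ := ZeroAtInftyContinuousMap.norm_toBCF_eq_norm

@[simp] theorem ZeroAtInftyContinuousMap.toBCFₗᵢ_apply {α β : Type*} [TopologicalSpace α]
    [NormedAddCommGroup β] [NormedSpace ℝ β] (f : C₀(α, β)) : toBCFₗᵢ α β f = f.toBCF := rfl

section FinsetIndicator

variable {X : Type*} [NormedAddCommGroup X]

def finsetIndicator (s : Finset ℕ) (x : ℕ → X) : C₀(ℕ, X) where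
  toFun := Set.indicator s x
  continuous_toFun := continuous_of_discreteTopology
  zero_at_infty' := by
    rw [cocompact_eq_atTop]
    refine tendsto_const_nhds.congr' ?_
    filter_upwards [eventually_gt_atTop (s.sup id)] with k hk
    exact (Set.indicator_of_notMem (fun hks => (s.le_sup (f := id) hks).not_gt hk) x).symm

@[simp] theorem coe_finsetIndicator (s : Finset ℕ) (x : ℕ → X) :
    ⇑(finsetIndicator s x) = Set.indicator s x := rfl

theorem norm_finsetIndicator_le {s : Finset ℕ} {x : ℕ → X} {b : ℝ} (hb : 0 ≤ b)
    (hx : ∀ k ∈ s, ‖x k‖ ≤ b) : ‖finsetIndicator s x‖ ≤ b := by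
  rw [← ZeroAtInftyContinuousMap.norm_toBCF_eq_norm, BoundedContinuousFunction.norm_le hb]
  intro k
  by_cases hk : k ∈ s
  · simpa [hk] using hx k hk
  · simpa [hk] using hb

end FinsetIndicator

section Multipliers

variable {X Y : Type*} [NormedAddCommGroup X] [NormedSpace ℝ X]
  [NormedAddCommGroup Y] [NormedSpace ℝ Y] {r : ℕ → ℝ}

theorem sum_range_finsetIndicator (T : ℕ → X →L[ℝ] Y) {s : Finset ℕ} {x : ℕ → X} {n : ℕ}
    (hs : s ⊆ range n) : ∑ k ∈ range n, T k (finsetIndicator s x k) = ∑ k ∈ s, T k (x k) :=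
  (sum_subset hs fun k _ hk => by simp [hk]).symm.trans (sum_congr rfl fun k hk => by simp [hk])

def partialSumCLM (T : ℕ → X →L[ℝ] Y) (n : ℕ) : (ℕ →ᵇ X) →L[ℝ] Y :=
  ∑ j ∈ range n, (T j).comp (evalCLM ℝ j)

@[simp] theorem partialSumCLM_apply (T : ℕ → X →L[ℝ] Y) (n : ℕ) (f : ℕ →ᵇ X) :
    partialSumCLM T n f = ∑ j ∈ range n, T j (f j) := by
  simp [partialSumCLM]

theorem weakRieszSeriesConvTo_iff {s : ℕ → Y} {l : Y} :
    WeakRieszSeriesConvTo r s l ↔ ∀ φ : StrongDual ℝ Y,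
      Tendsto (fun n => φ (rieszMean r (fun k => ∑ j ∈ range (k + 1), s j) n)) atTop
        (𝓝 (φ l)) := by
  simp only [map_rieszMean]
  rfl

theorem WeakRieszSeriesConvTo.of_tendsto (hr : ∀ k, 0 ≤ r k)
    (hR : Tendsto (fun n => ∑ k ∈ range n, r k) atTop atTop) {s : ℕ → Y} {l : Y}
    (hs : Tendsto (fun n => ∑ k ∈ range n, s k) atTop (𝓝 l)) : WeakRieszSeriesConvTo r s l :=
  fun φ => tendsto_rieszMean hr hR
    ((φ.continuous.tendsto l).comp (hs.comp (tendsto_add_atTop_nat 1)))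

theorem weakRieszSeriesConvTo_iff_partialSumCLM {T : ℕ → X →L[ℝ] Y} {f : ℕ →ᵇ X} {y : Y} :
    WeakRieszSeriesConvTo r (fun k => T k (f k)) y ↔ ∀ φ : StrongDual ℝ Y,
      Tendsto (fun n => φ (rieszMean r (fun k => partialSumCLM T (k + 1)) n f)) atTop
        (𝓝 (φ y)) := by
  simp only [weakRieszSeriesConvTo_iff, rieszMean_apply, partialSumCLM_apply]

theorem setOf_weakRieszSeriesConvTo_eq (r : ℕ → ℝ) (T : ℕ → X →L[ℝ] Y) :
    {f : ℕ →ᵇ X | ∃ y, WeakRieszSeriesConvTo r (fun k => T k (f k)) y} =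
      weakConvergenceSubmodule (rieszMean r fun k => partialSumCLM T (k + 1)) := by
  ext f
  exact exists_congr fun y => weakRieszSeriesConvTo_iff_partialSumCLM

theorem exists_norm_partialSumCLM_le [CompleteSpace X] (T : ℕ → X →L[ℝ] Y)
    (H : ∀ x : ℕ → X, Tendsto x atTop (𝓝 0) →
      ∃ y, Tendsto (fun n => ∑ k ∈ range n, T k (x k)) atTop (𝓝 y)) :
    ∃ C, ∀ n, ‖partialSumCLM T n‖ ≤ C := by
  let ι := (ZeroAtInftyContinuousMap.toBCFₗᵢ ℕ X).toContinuousLinearMap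
  obtain ⟨C, hC⟩ := banach_steinhaus (g := fun n => (partialSumCLM T n).comp ι) fun z => by
    obtain ⟨y, hy⟩ := H z (cocompact_eq_atTop (α := ℕ) ▸ zero_at_infty z)
    simpa [ι] using hy.norm.bddAbove_range.imp fun _ h n => h (Set.mem_range_self n)
  have hC0 : 0 ≤ C := (norm_nonneg _).trans (hC 0)
  refine ⟨C, fun n => (partialSumCLM T n).opNorm_le_bound hC0 fun f => ?_⟩
  -- only the first `n` terms of `f` enter, and their truncation is a null sequence
  have htrunc : partialSumCLM T n f = (partialSumCLM T n).comp ι (finsetIndicator (range n) f) :=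
    by simpa [ι] using (sum_range_finsetIndicator T (x := f) subset_rfl).symm
  rw [htrunc]
  exact ((partialSumCLM T n).comp ι).le_of_opNorm_le_of_le (hC n)
    (norm_finsetIndicator_le (norm_nonneg f) fun k _ => f.norm_coe_le_norm k)

theorem exists_norm_sum_le_of_isComplete (hr : ∀ k, 0 ≤ r k)
    (hR : Tendsto (fun n => ∑ k ∈ range n, r k) atTop atTop) (T : ℕ → X →L[ℝ] Y)
    (h : IsComplete {f : ℕ →ᵇ X | ∃ y, WeakRieszSeriesConvTo r (fun k => T k (f k)) y}) :
    ∃ C, 0 ≤ C ∧ ∀ (s : Finset ℕ) (x : ℕ → X) (b : ℝ), 0 ≤ b → (∀ k ∈ s, ‖x k‖ ≤ b) →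
      ‖∑ k ∈ s, T k (x k)‖ ≤ C * b := by
  rw [setOf_weakRieszSeriesConvTo_eq] at h
  obtain ⟨C, hC0, hC⟩ := exists_bound_of_isComplete_weakConvergenceSubmodule h
  refine ⟨C, hC0, fun s x b hb hx => ?_⟩
  let g := (finsetIndicator s x).toBCF
  have hg : WeakRieszSeriesConvTo r (fun k => T k (g k)) (∑ k ∈ s, T k (x k)) :=
    .of_tendsto hr hR <| tendsto_atTop_of_eventually_const fun n hn =>
      sum_range_finsetIndicator T <| s.subset_range_sup_succ.trans (range_subset_range.mpr hn)
  have hmem : g ∈ (weakConvergenceSubmodule (rieszMean r fun k => partialSumCLM T (k + 1)) :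
      Set (ℕ →ᵇ X)) := setOf_weakRieszSeriesConvTo_eq r T ▸ ⟨_, hg⟩
  refine norm_le_of_forall_dual_tendsto (fun n => (hC n g hmem).trans ?_)
    (weakRieszSeriesConvTo_iff_partialSumCLM.mp hg)
  exact mul_le_mul_of_nonneg_left ((ZeroAtInftyContinuousMap.norm_toBCF_eq_norm).trans_le
    (norm_finsetIndicator_le hb hx)) hC0

theorem cauchySeq_sum_range_of_norm_sum_le {T : ℕ → X →L[ℝ] Y} {C : ℝ} (hC0 : 0 ≤ C)
    (hC : ∀ (s : Finset ℕ) (x : ℕ → X) (b : ℝ), 0 ≤ b → (∀ k ∈ s, ‖x k‖ ≤ b) →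
      ‖∑ k ∈ s, T k (x k)‖ ≤ C * b)
    {x : ℕ → X} (hx : Tendsto x atTop (𝓝 0)) : CauchySeq fun n => ∑ k ∈ range n, T k (x k) := by
  refine Metric.cauchySeq_iff'.mpr fun ε hε => ?_
  have hδ : 0 < ε / (C + 1) := by positivity
  obtain ⟨N, hN⟩ := eventually_atTop.mp (NormedAddGroup.tendsto_nhds_zero.mp hx _ hδ)
  refine ⟨N, fun n hn => ?_⟩
  calc dist (∑ k ∈ range n, T k (x k)) (∑ k ∈ range N, T k (x k))
      = ‖∑ k ∈ Ico N n, T k (x k)‖ := by rw [dist_eq_norm, sum_Ico_eq_sub _ hn]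
    _ ≤ C * (ε / (C + 1)) := hC _ x _ hδ.le fun k hk => (hN k (mem_Ico.mp hk).1).le
    _ < ε := by
        rw [mul_div_assoc', div_lt_iff₀ (by positivity)]
        nlinarith

end Multipliers

end

theorem c0_multiplier_convergent_iff_MwR_complete_general
    {X Y : Type*} [NormedAddCommGroup X] [NormedSpace ℝ X] [CompleteSpace X]
    [NormedAddCommGroup Y] [NormedSpace ℝ Y] [CompleteSpace Y]
    (r : ℕ → ℝ) (hr : ∀ k, 0 ≤ r k)
    (hR : Tendsto (fun n => ∑ k ∈ Finset.range n, r k) atTop atTop)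
    (T : ℕ → X →L[ℝ] Y) :
    (∀ x : ℕ → X, Tendsto x atTop (𝓝 0) → ∃ y : Y,
        Tendsto (fun n => ∑ k ∈ Finset.range n, T k (x k)) atTop (𝓝 y)) ↔
    IsComplete {f : ℕ →ᵇ X | ∃ y : Y, WeakRieszSeriesConvTo r (fun k => T k (f k)) y} := by
  constructor
  · intro H
    obtain ⟨C, hC⟩ := exists_norm_partialSumCLM_le T H
    rw [setOf_weakRieszSeriesConvTo_eq]
    exact (isClosed_weakConvergenceSubmodule (norm_rieszMean_le hr fun k => hC (k + 1))).isComplete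
  · intro h x hx
    obtain ⟨C, hC0, hC⟩ := exists_norm_sum_le_of_isComplete hr hR T h
    exact cauchySeq_tendsto_of_complete (cauchySeq_sum_range_of_norm_sum_le hC0 hC hx)

/-- `∑ T k` is `c₀(X)`-multiplier convergent iff the weak Riesz multiplier space
`M^∞_{wR}(∑ T k)` (as a subset of the bounded `X`-valued sequences with the sup
norm) is complete, i.e. a Banach space. -/
theorem c0_multiplier_convergent_iff_MwR_complete
    {X Y : Type*} [NormedAddCommGroup X] [NormedSpace ℝ X] [CompleteSpace X]
    [NormedAddCommGroup Y] [NormedSpace ℝ Y] [CompleteSpace Y]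
    (r : ℕ → ℝ) (hr0 : 0 < r 0) (hr : ∀ k, 0 ≤ r k)
    (hR : Tendsto (fun n => ∑ k ∈ Finset.range n, r k) atTop atTop)
    (T : ℕ → X →L[ℝ] Y) :
    (∀ x : ℕ → X, Tendsto x atTop (𝓝 0) → ∃ y : Y,
        Tendsto (fun n => ∑ k ∈ Finset.range n, T k (x k)) atTop (𝓝 y)) ↔
    IsComplete {f : ℕ →ᵇ X | ∃ y : Y, WeakRieszSeriesConvTo r (fun k => T k (f k)) y} :=
  c0_multiplier_convergent_iff_MwR_complete_general r hr hR T
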